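/- Let (X, Y, ⟨·,·⟩) be a dual pairing, h : X → ℝ̄, and for n ≥ 1 define h^{n∪}(x) := sup{⟨x-x₁,y₁⟩ + ⟨x₁-x₂,y₂⟩ + … + ⟨xₙ₋₁-xₙ,yₙ⟩ + h(xₙ) : (xᵢ,yᵢ) ∈ Graph(∂h) for i=1..n}. Then h^{n∪} = h^{1∪} for every n ≥ 1. -/

import Mathlib

variable {X Y : Type*} [AddCommGroup X] [Module ℝ X] [AddCommGroup Y] [Module ℝ Y]

/-- `y` is a subgradient of `h : X → ℝ̄` at `x`. -/
def IsSubgrad (b : X →ₗ[ℝ] Y →ₗ[ℝ] ℝ) (h : X → EReal) (x : X) (y : Y) : Prop :=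
  ∃ s : ℝ, h x = (s : EReal) ∧ ∀ w : X, ((b (w - x) y : ℝ) : EReal) + (s : EReal) ≤ h w

/-- `h^{n∪}(x) = sup{⟨x-x₁,y₁⟩ + ⟨x₁-x₂,y₂⟩ + … + ⟨xₙ₋₁-xₙ,yₙ⟩ + h(xₙ) :
(xᵢ,yᵢ) ∈ Graph ∂h}`. -/
noncomputable def hcupN (b : X →ₗ[ℝ] Y →ₗ[ℝ] ℝ) (h : X → EReal) (n : ℕ)
    (x : X) : EReal :=
  sSup {r : EReal | ∃ c : ℕ → X × Y,
    (∀ i ∈ Finset.Icc 1 n, IsSubgrad b h (c i).1 (c i).2) ∧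
    r = ((b (x - (c 1).1) (c 1).2
        + ∑ i ∈ Finset.Icc 2 n, b ((c (i - 1)).1 - (c i).1) (c i).2 : ℝ) : EReal)
        + h (c n).1}

open Finset

variable {b : X →ₗ[ℝ] Y →ₗ[ℝ] ℝ} {h : X → EReal}

theorem IsSubgrad.pairing_add_le {x : X} {y : Y} (hxy : IsSubgrad b h x y) (w : X) :
    ((b (w - x) y : ℝ) : EReal) + h x ≤ h w := by
  obtain ⟨s, hs, hle⟩ := hxy
  exact hs ▸ hle w

/-- The chain sum telescopes: each link `⟨xᵢ₋₁ - xᵢ, yᵢ⟩ + h xᵢ` is bounded by `h xᵢ₋₁`. -/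
theorem chainSum_add_le_of_isSubgrad (c : ℕ → X × Y) {n : ℕ} (hn : 1 ≤ n)
    (hc : ∀ i ∈ Icc 1 n, IsSubgrad b h (c i).1 (c i).2) :
    ((∑ i ∈ Icc 2 n, b ((c (i - 1)).1 - (c i).1) (c i).2 : ℝ) : EReal) + h (c n).1
      ≤ h (c 1).1 := by
  induction n, hn using Nat.le_induction with
  | base => simp
  | succ n hn ih =>
    have hlink := (hc (n + 1) (by simp)).pairing_add_le (c n).1
    rw [sum_Icc_succ_top (by omega), Nat.add_sub_cancel, EReal.coe_add, add_assoc]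
    calc _ ≤ ((∑ i ∈ Icc 2 n, b ((c (i - 1)).1 - (c i).1) (c i).2 : ℝ) : EReal)
            + h (c n).1 := add_le_add_right hlink _
      _ ≤ h (c 1).1 := ih fun i hi => hc i (Icc_subset_Icc_right (by omega) hi)

theorem hcupN_le_hcupN_one {n : ℕ} (hn : 1 ≤ n) (x : X) : hcupN b h n x ≤ hcupN b h 1 x := by
  refine sSup_le ?_
  rintro r ⟨c, hc, rfl⟩
  refine le_sSup_of_le ⟨c, fun i hi => hc i (Icc_subset_Icc_right hn hi), rfl⟩ ?_
  rw [Icc_eq_empty_of_lt one_lt_two, sum_empty, add_zero, EReal.coe_add, add_assoc]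
  exact add_le_add_right (chainSum_add_le_of_isSubgrad c hn hc) _

/-- Repeating a single subgradient pair `n` times makes every intermediate pairing vanish. -/
theorem hcupN_one_le_hcupN (n : ℕ) (x : X) : hcupN b h 1 x ≤ hcupN b h n x := by
  refine sSup_le ?_
  rintro r ⟨c, hc, rfl⟩
  exact le_sSup ⟨fun _ => c 1, fun _ _ => hc 1 (by simp), by simp⟩

/-- `h^{n∪} = h^{1∪}` for every `n ≥ 1`. -/
theorem hcupN_eq_hcupOne (b : X →ₗ[ℝ] Y →ₗ[ℝ] ℝ) (h : X → EReal) (n : ℕ)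
    (hn : 1 ≤ n) (x : X) :
    hcupN b h n x = hcupN b h 1 x :=
  le_antisymm (hcupN_le_hcupN_one hn x) (hcupN_one_le_hcupN n x)
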